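/- arXiv:0910.2099 — 12 statements merged into one kernel-verified Lean document; each statement's English description precedes it below -/
import Mathlib

section
/- For a demi-matroid (E,s,t), the axiom (D) is equivalent to the axiom (D'): for all X ⊆ E, |E−X| − t(E−X) = s(E) − s(X). -/
open Finset

private lemma demimatroid_aux {E : Type*} [Fintype E] [DecidableEq E]
    (s t : Finset E → ℕ) (ht0 : t ∅ = 0)
    (hD : ∀ X : Finset E, ((univ \ X).card : ℤ) - s (univ \ X) = (t univ : ℤ) - t X) :
    ∀ X : Finset E, ((univ \ X).card : ℤ) - t (univ \ X) = (s univ : ℤ) - s X := by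
  intro X
  have h1 := hD (univ \ X)
  rw [sdiff_sdiff_self_left, univ_inter] at h1
  have h0 := hD ∅
  rw [sdiff_empty, ht0] at h0
  have hc : ((univ \ X).card : ℤ) = (univ : Finset E).card - X.card := by
    rw [card_sdiff_of_subset (subset_univ X)]
    have := card_le_card (subset_univ X)
    omega
  have hc2 : ((univ \ (univ \ X)).card : ℤ) = X.card := by
    rw [sdiff_sdiff_self_left, univ_inter]
  omega

/-- For a demi-matroid `(E, s, t)` (i.e. `s, t` satisfy the rank axiom (R)),
the axiom (D) is equivalent to the axiom (D'). -/
theorem demimatroid_D_iff_D' {E : Type*} [Fintype E] [DecidableEq E]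
    (s t : Finset E → ℕ)
    (hRs : ∀ X Y : Finset E, X ⊆ Y → s X ≤ s Y ∧ s Y ≤ Y.card)
    (hRt : ∀ X Y : Finset E, X ⊆ Y → t X ≤ t Y ∧ t Y ≤ Y.card) :
    (∀ X : Finset E, ((univ \ X).card : ℤ) - s (univ \ X) = (t univ : ℤ) - t X) ↔
    (∀ X : Finset E, ((univ \ X).card : ℤ) - t (univ \ X) = (s univ : ℤ) - s X) := by
  have hs0 : s ∅ = 0 := Nat.le_zero.mp ((hRs ∅ ∅ (subset_refl _)).2.trans_eq card_empty)
  have ht0 : t ∅ = 0 := Nat.le_zero.mp ((hRt ∅ ∅ (subset_refl _)).2.trans_eq card_empty)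
  exact ⟨demimatroid_aux s t ht0, demimatroid_aux t s hs0⟩
end

section
/- In a demi-matroid (E,s,t) with |E| = n and k = s(E), defining σ_i := min{|X| : X ⊆ E, s(X) ≥ i} for 0 ≤ i ≤ k, the sequence is strictly increasing: 0 = σ_0 < σ_1 < ⋯ < σ_k ≤ n. -/
open Finset

/-!
By duality, `|X| - s X = t E - t (E - X)`; so `s ∅ = 0`, and the nullity `X ↦ |X| - s X` is
monotone, as `t` is, i.e. deleting one element lowers `s` by at most one. A smallest set `X` with
`s X ≥ i + 1` is therefore nonempty, and deleting any of its elements leaves a set with `s ≥ i`,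
so `σ_i ≤ |X| - 1 < σ_{i+1}`.
-/

section Demimatroid

variable {E : Type*} (s : Finset E → ℕ)

theorem rank_empty_eq_zero_of_dual [Fintype E] [DecidableEq E] {t : Finset E → ℕ}
    (hD : ∀ X : Finset E, ((univ \ X).card : ℤ) - s (univ \ X) = (t univ : ℤ) - t X) :
    s ∅ = 0 := by
  have h := hD univ
  rw [Finset.sdiff_self, card_empty] at h
  omega

theorem card_sub_rank_mono_of_dual [Fintype E] [DecidableEq E] {t : Finset E → ℕ}
    (ht : ∀ X Y : Finset E, X ⊆ Y → t X ≤ t Y)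
    (hD : ∀ X : Finset E, ((univ \ X).card : ℤ) - s (univ \ X) = (t univ : ℤ) - t X)
    {X Y : Finset E} (hYX : Y ⊆ X) : (Y.card : ℤ) - s Y ≤ X.card - s X := by
  have hX := hD (univ \ X)
  have hY := hD (univ \ Y)
  rw [sdiff_sdiff_right_self, inf_eq_right.2 (subset_univ X)] at hX
  rw [sdiff_sdiff_right_self, inf_eq_right.2 (subset_univ Y)] at hY
  have := ht _ _ (sdiff_subset_sdiff (Subset.refl univ) hYX)
  omega

/-- The paper's `σ_i`; it is `0` when `s univ < i`, the set being empty. -/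
noncomputable def minCardRankGe (i : ℕ) : ℕ :=
  sInf {m | ∃ X : Finset E, X.card = m ∧ i ≤ s X}

theorem minCardRankGe_le_card {i : ℕ} {X : Finset E} (hX : i ≤ s X) :
    minCardRankGe s i ≤ X.card :=
  Nat.sInf_le ⟨X, rfl, hX⟩

theorem minCardRankGe_zero : minCardRankGe s 0 = 0 :=
  Nat.eq_zero_of_le_zero (minCardRankGe_le_card s (X := ∅) (Nat.zero_le _))

theorem exists_card_eq_minCardRankGe [Fintype E] {i : ℕ} (hi : i ≤ s univ) :
    ∃ X : Finset E, X.card = minCardRankGe s i ∧ i ≤ s X :=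
  Nat.sInf_mem (s := {m | ∃ X : Finset E, X.card = m ∧ i ≤ s X}) ⟨_, univ, rfl, hi⟩

theorem minCardRankGe_lt_succ [Fintype E] [DecidableEq E] (hs₀ : s ∅ = 0)
    (hnull : ∀ X Y : Finset E, Y ⊆ X → (Y.card : ℤ) - s Y ≤ X.card - s X)
    {i : ℕ} (hi : i < s univ) : minCardRankGe s i < minCardRankGe s (i + 1) := by
  obtain ⟨X, hXcard, hXs⟩ := exists_card_eq_minCardRankGe s (i := i + 1) hi
  obtain ⟨e, he⟩ : X.Nonempty := nonempty_iff_ne_empty.2 (by rintro rfl; omega)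
  have hdrop := hnull X (X.erase e) (erase_subset e X)
  have hcard := card_erase_add_one he
  have hle := minCardRankGe_le_card s (i := i) (X := X.erase e) (by omega)
  omega

end Demimatroid

theorem demimatroid_sigma_strictMono_general {E : Type*} [Fintype E] [DecidableEq E]
    (s t : Finset E → ℕ)
    (hRt : ∀ X Y : Finset E, X ⊆ Y → t X ≤ t Y ∧ t Y ≤ Y.card)
    (hD : ∀ X : Finset E, ((univ \ X).card : ℤ) - s (univ \ X) = (t univ : ℤ) - t X) :
    let σ : ℕ → ℕ := fun i => sInf {m | ∃ X : Finset E, X.card = m ∧ i ≤ s X}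
    σ 0 = 0 ∧ (∀ i < s univ, σ i < σ (i + 1)) ∧ σ (s univ) ≤ Fintype.card E := by
  have hs₀ := rank_empty_eq_zero_of_dual s hD
  have hnull : ∀ X Y : Finset E, Y ⊆ X → (Y.card : ℤ) - s Y ≤ X.card - s X :=
    fun _ _ => card_sub_rank_mono_of_dual s (fun X Y h => (hRt X Y h).1) hD
  exact ⟨minCardRankGe_zero s, fun i hi => minCardRankGe_lt_succ s hs₀ hnull hi,
    minCardRankGe_le_card s le_rfl⟩

/-- In a demi-matroid, the sequence `σ_0, σ_1, …, σ_k` is strictly increasing,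
with `σ_0 = 0` and `σ_k ≤ n`. -/
theorem demimatroid_sigma_strictMono {E : Type*} [Fintype E] [DecidableEq E]
    (s t : Finset E → ℕ)
    (hRs : ∀ X Y : Finset E, X ⊆ Y → s X ≤ s Y ∧ s Y ≤ Y.card)
    (hRt : ∀ X Y : Finset E, X ⊆ Y → t X ≤ t Y ∧ t Y ≤ Y.card)
    (hD : ∀ X : Finset E, ((univ \ X).card : ℤ) - s (univ \ X) = (t univ : ℤ) - t X) :
    let σ : ℕ → ℕ := fun i => sInf {m | ∃ X : Finset E, X.card = m ∧ i ≤ s X}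
    σ 0 = 0 ∧ (∀ i < s univ, σ i < σ (i + 1)) ∧ σ (s univ) ≤ Fintype.card E :=
  demimatroid_sigma_strictMono_general s t hRt hD
end

section
/- In a demi-matroid (E,s,t) with |E| = n and k = s(E), defining s_i := max{|X| : X ⊆ E, s(X) ≤ i} for 0 ≤ i ≤ k, the sequence is strictly increasing with s_k = n: 0 ≤ s_0 < s_1 < ⋯ < s_k = n. -/
open Finset

/-- In a demi-matroid, the sequence `s_0, s_1, …, s_k` is strictly increasing,
with `s_k = n`. -/
theorem demimatroid_smax_strictMono {E : Type*} [Fintype E] [DecidableEq E]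
    (s t : Finset E → ℕ)
    (hRs : ∀ X Y : Finset E, X ⊆ Y → s X ≤ s Y ∧ s Y ≤ Y.card)
    (hRt : ∀ X Y : Finset E, X ⊆ Y → t X ≤ t Y ∧ t Y ≤ Y.card)
    (hD : ∀ X : Finset E, ((univ \ X).card : ℤ) - s (univ \ X) = (t univ : ℤ) - t X) :
    let smax : ℕ → ℕ := fun i => sSup {m | ∃ X : Finset E, X.card = m ∧ s X ≤ i}
    (∀ i < s univ, smax i < smax (i + 1)) ∧ smax (s univ) = Fintype.card E := by
  intro smax
  have hsempty : s ∅ = 0 := Nat.le_zero.mp ((hRs ∅ ∅ (subset_refl _)).2)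
  -- unit increase property
  have hunit : ∀ (Y : Finset E) (e : E), e ∉ Y → s (insert e Y) ≤ s Y + 1 := by
    intro Y e he
    have hset1 : univ \ (univ \ insert e Y) = insert e Y := by
      ext x; simp
    have hset2 : univ \ insert e (univ \ insert e Y) = Y := by
      ext x
      by_cases hx : x = e <;> simp [hx, he] <;> tauto
    have h1 := hD (univ \ insert e Y)
    have h2 := hD (insert e (univ \ insert e Y))
    rw [hset1] at h1
    rw [hset2] at h2
    have ht := (hRt (univ \ insert e Y) (insert e (univ \ insert e Y))
      (subset_insert _ _)).1
    have hcard : (insert e Y).card = Y.card + 1 := card_insert_of_notMem he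
    have hZ : (s (insert e Y) : ℤ) ≤ (s Y : ℤ) + 1 := by
      push_cast [hcard] at h1
      have ht' : (t (univ \ insert e Y) : ℤ) ≤ t (insert e (univ \ insert e Y)) := by
        exact_mod_cast ht
      linarith
    exact_mod_cast hZ
  have hne : ∀ i, {m | ∃ X : Finset E, X.card = m ∧ s X ≤ i}.Nonempty := by
    intro i
    exact ⟨0, ∅, card_empty, by omega⟩
  have hbdd : ∀ i, BddAbove {m | ∃ X : Finset E, X.card = m ∧ s X ≤ i} := by
    intro i
    refine ⟨Fintype.card E, ?_⟩
    rintro m ⟨X, rfl, -⟩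
    exact card_le_univ X
  have hmem : ∀ i, smax i ∈ {m | ∃ X : Finset E, X.card = m ∧ s X ≤ i} :=
    fun i => Nat.sSup_mem (hne i) (hbdd i)
  constructor
  · intro i hi
    simp only [smax]
    obtain ⟨X, hX, hsX⟩ := Nat.sSup_mem (hne i) (hbdd i)
    have hXne : X ≠ univ := by
      rintro rfl; omega
    obtain ⟨e, he⟩ : ∃ e, e ∉ X := by
      by_contra h
      push_neg at h
      exact hXne (eq_univ_of_forall h)
    have hmem' : X.card + 1 ∈ {m | ∃ X : Finset E, X.card = m ∧ s X ≤ i + 1} :=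
      ⟨insert e X, card_insert_of_notMem he,
        le_trans (hunit X e he) (by omega)⟩
    have := le_csSup (hbdd (i + 1)) hmem'
    omega
  · refine le_antisymm ?_ ?_
    · obtain ⟨X, hX, -⟩ := hmem (s univ)
      rw [← hX]; exact card_le_univ X
    · exact le_csSup (hbdd (s univ)) ⟨univ, card_univ, le_refl _⟩
end

section
/- In a demi-matroid (E,s,t) with |E| = n and k = s(E), the generalized Singleton bound σ_i ≤ n − k + i holds for all 0 ≤ i ≤ k, where σ_i := min{|X| : X ⊆ E, s(X) ≥ i}. -/
/-!
Duality at `X = ∅` gives `t(E) - t(∅) = n - k`, and at `X = E - Y` it gives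
`|Y| - s(Y) = t(E) - t(E - Y)`, which is at most `n - k` because `t` is monotone.
Hence every `Y` of size `n - k + i` has `s(Y) ≥ i`, and such a `Y` exists since `k ≤ n`.
-/

open Finset

theorem card_sub_le_card_sub_of_duality {E : Type*} [Fintype E] [DecidableEq E]
    {s t : Finset E → ℕ} (ht : Monotone t)
    (hD : ∀ X : Finset E, ((univ \ X).card : ℤ) - s (univ \ X) = (t univ : ℤ) - t X)
    (Y : Finset E) :
    (Y.card : ℤ) - s Y ≤ Fintype.card E - s univ := by
  have hY := hD (univ \ Y)
  rw [Finset.sdiff_sdiff_eq_self (subset_univ Y)] at hY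
  have hE := hD ∅
  rw [sdiff_empty, card_univ] at hE
  have : t ∅ ≤ t (univ \ Y) := ht (empty_subset _)
  omega

/-- Generalized Singleton bound for demi-matroids: `σ_i ≤ n - k + i` for `0 ≤ i ≤ k`. -/
theorem demimatroid_singleton_bound_sigma {E : Type*} [Fintype E] [DecidableEq E]
    (s t : Finset E → ℕ)
    (hRs : ∀ X Y : Finset E, X ⊆ Y → s X ≤ s Y ∧ s Y ≤ Y.card)
    (hRt : ∀ X Y : Finset E, X ⊆ Y → t X ≤ t Y ∧ t Y ≤ Y.card)
    (hD : ∀ X : Finset E, ((univ \ X).card : ℤ) - s (univ \ X) = (t univ : ℤ) - t X) :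
    ∀ i ≤ s univ,
      sInf {m | ∃ X : Finset E, X.card = m ∧ i ≤ s X} ≤
        Fintype.card E - s univ + i := by
  intro i hi
  have hk : s univ ≤ Fintype.card E := by simpa using (hRs univ univ subset_rfl).2
  obtain ⟨Y, -, hYcard⟩ := exists_subset_card_eq (s := (univ : Finset E))
    (n := Fintype.card E - s univ + i) (by rw [card_univ]; omega)
  have hnullity := card_sub_le_card_sub_of_duality (fun X Y h => (hRt X Y h).1) hD Y
  exact Nat.sInf_le ⟨Y, hYcard, by omega⟩
end

section
/- In a demi-matroid (E,s,t) with |E| = n and k = s(E), the bound τ_j ≤ k + j holds for all 0 ≤ j ≤ n−k, where τ_j := min{|X| : X ⊆ E, t(X) ≥ j}. -/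
open Finset

/-- Generalized Singleton bound for demi-matroids: `τ_j ≤ k + j` for `0 ≤ j ≤ n - k`. -/
theorem demimatroid_singleton_bound_tau {E : Type*} [Fintype E] [DecidableEq E]
    (s t : Finset E → ℕ)
    (hRs : ∀ X Y : Finset E, X ⊆ Y → s X ≤ s Y ∧ s Y ≤ Y.card)
    (hRt : ∀ X Y : Finset E, X ⊆ Y → t X ≤ t Y ∧ t Y ≤ Y.card)
    (hD : ∀ X : Finset E, ((univ \ X).card : ℤ) - s (univ \ X) = (t univ : ℤ) - t X) :
    ∀ j ≤ Fintype.card E - s univ,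
      sInf {m | ∃ X : Finset E, X.card = m ∧ j ≤ t X} ≤ s univ + j := by
  intro j hj
  set k := s univ with hk
  have hkn : k ≤ Fintype.card E := by
    simpa using (hRs univ univ (subset_refl _)).2
  have hkj : k + j ≤ Fintype.card E := by omega
  obtain ⟨X, hXsub, hXcard⟩ := Finset.exists_subset_card_eq
    (show k + j ≤ (univ : Finset E).card by simpa using hkj)
  have hDX := hD X
  have hD0 := hD (∅ : Finset E)
  have hcompl : (univ \ X).card = Fintype.card E - (k + j) := by
    rw [Finset.card_sdiff_of_subset hXsub, hXcard, Finset.card_univ]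
  simp only [Finset.sdiff_empty, Finset.card_univ] at hD0
  -- t univ ≥ n - k
  have htuniv : (Fintype.card E : ℤ) - k ≤ t univ := by omega
  have hsnn : (0 : ℤ) ≤ s (univ \ X) := by positivity
  have htX : (j : ℤ) ≤ t X := by
    rw [hcompl] at hDX
    have : ((Fintype.card E - (k + j) : ℕ) : ℤ) = (Fintype.card E : ℤ) - (k + j) := by
      push_cast [Nat.cast_sub hkj]
      ring
    omega
  have hmem : (k + j) ∈ {m | ∃ X : Finset E, X.card = m ∧ j ≤ t X} :=
    ⟨X, hXcard, by exact_mod_cast htX⟩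
  exact Nat.sInf_le hmem
end

section
/- If D = (E,s,t) is a demi-matroid, then its dual D* := (E,t,s) is a demi-matroid, and (D*)* = D. -/
open Finset

/-- A demi-matroid: a finite ground type `E` with functions `s, t : Finset E → ℕ`
satisfying the rank axiom (R) and the duality axiom (D). -/
structure DemiMatroid (E : Type*) [Fintype E] [DecidableEq E] where
  s : Finset E → ℕ
  t : Finset E → ℕ
  hRs : ∀ X Y : Finset E, X ⊆ Y → s X ≤ s Y ∧ s Y ≤ Y.card
  hRt : ∀ X Y : Finset E, X ⊆ Y → t X ≤ t Y ∧ t Y ≤ Y.card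
  hD : ∀ X : Finset E,
    ((univ \ X).card : ℤ) - s (univ \ X) = (t univ : ℤ) - t X

theorem DemiMatroid.ext' {E : Type*} [Fintype E] [DecidableEq E]
    (D₁ D₂ : DemiMatroid E) (hs : D₁.s = D₂.s) (ht : D₁.t = D₂.t) : D₁ = D₂ := by
  cases D₁; cases D₂; simp_all

/-- The dual `D* = (E, t, s)` of a demi-matroid `D = (E, s, t)` is a demi-matroid,
and taking duals is an involution: `(D*)* = D`. -/
theorem demimatroid_dual {E : Type*} [Fintype E] [DecidableEq E] (D : DemiMatroid E) :
    ∃ Dd : DemiMatroid E, Dd.s = D.t ∧ Dd.t = D.s ∧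
      ∀ Ddd : DemiMatroid E, Ddd.s = Dd.t → Ddd.t = Dd.s → Ddd = D := by
  have ht0 : D.t ∅ = 0 := Nat.le_zero.mp <| by
    simpa using (D.hRt ∅ ∅ (subset_refl _)).2
  have hsuniv : (D.s univ : ℤ) = (univ : Finset E).card - D.t univ := by
    have := D.hD ∅
    rw [sdiff_empty, ht0] at this
    push_cast at this
    omega
  have hDd : ∀ X : Finset E,
      ((univ \ X).card : ℤ) - D.t (univ \ X) = (D.s univ : ℤ) - D.s X := by
    intro X
    have h1 := D.hD (univ \ X)
    rw [sdiff_sdiff_right_self, inf_eq_inter, univ_inter] at h1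
    have hcard : ((univ \ X).card : ℤ) = (univ : Finset E).card - X.card := by
      rw [card_sdiff_of_subset (subset_univ X)]
      have := card_le_card (subset_univ X)
      omega
    omega
  refine ⟨⟨D.t, D.s, D.hRt, D.hRs, hDd⟩, rfl, rfl, ?_⟩
  intro Ddd hs ht
  exact DemiMatroid.ext' Ddd D hs ht
end

section
/- If D = (E,s,t) is a demi-matroid, then its supplement D̄ := (E, s̄, t̄) is a demi-matroid, where f̄(X) := f(E) − f(E−X); moreover D̄̄ = D and the supplement of D* equals (D̄)*. -/
open Finset

/-- The supplement operation `f ↦ f̄` with `f̄ X = f E - f (E \ X)`. -/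
def supp {E : Type*} [Fintype E] [DecidableEq E] (f : Finset E → ℕ) : Finset E → ℕ :=
  fun X => f univ - f (univ \ X)

namespace DemiMatroidAux

variable {E : Type*} [Fintype E] [DecidableEq E]

lemma ext_aux {D1 D2 : DemiMatroid E} (hs : D1.s = D2.s) (ht : D1.t = D2.t) :
    D1 = D2 := by
  cases D1; cases D2; simp_all

lemma card_sdiff_univ (X : Finset E) :
    (univ \ X).card = Fintype.card E - X.card := by
  rw [card_sdiff_of_subset (subset_univ X), card_univ]

lemma sdiff_sdiff_univ (X : Finset E) : univ \ (univ \ X) = X := by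
  simp

lemma t_empty (D : DemiMatroid E) : D.t ∅ = 0 := by
  have := (D.hRt ∅ ∅ subset_rfl).2
  simpa using this

lemma sum_eq (D : DemiMatroid E) : D.s univ + D.t univ = Fintype.card E := by
  have h := D.hD ∅
  have h0 := t_empty D
  have hb := (D.hRs univ univ subset_rfl).2
  simp only [sdiff_empty, card_univ] at h hb
  omega

lemma suppT (D : DemiMatroid E) (X : Finset E) :
    supp D.t X = X.card - D.s X := by
  have h := D.hD (univ \ X)
  rw [sdiff_sdiff_univ] at h
  have h2 : D.t (univ \ X) ≤ D.t univ := (D.hRt _ _ (subset_univ _)).1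
  have h3 : D.s X ≤ X.card := (D.hRs X X subset_rfl).2
  simp only [supp]
  omega

lemma suppS (D : DemiMatroid E) (X : Finset E) :
    supp D.s X = X.card - D.t X := by
  have h := D.hD X
  have hsum := sum_eq D
  have hc : (univ \ X).card = Fintype.card E - X.card := card_sdiff_univ X
  have hcle : X.card ≤ Fintype.card E := by
    simpa [card_univ] using card_le_card (subset_univ X)
  have h2 : D.s (univ \ X) ≤ D.s univ := (D.hRs _ _ (subset_univ _)).1
  have h3 : D.t X ≤ X.card := (D.hRt X X subset_rfl).2
  simp only [supp]
  omega

lemma supp_mono (f : Finset E → ℕ) (hf : ∀ X Y : Finset E, X ⊆ Y → f X ≤ f Y)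
    {X Y : Finset E} (h : X ⊆ Y) : supp f X ≤ supp f Y :=
  Nat.sub_le_sub_left (hf _ _ (sdiff_subset_sdiff subset_rfl h)) _

def Dsup (D : DemiMatroid E) : DemiMatroid E where
  s := supp D.s
  t := supp D.t
  hRs := by
    intro X Y hXY
    refine ⟨supp_mono _ (fun A B h => (D.hRs A B h).1) hXY, ?_⟩
    rw [suppS]
    omega
  hRt := by
    intro X Y hXY
    refine ⟨supp_mono _ (fun A B h => (D.hRt A B h).1) hXY, ?_⟩
    rw [suppT]
    omega
  hD := by
    intro X
    have h := D.hD (univ \ X)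
    rw [sdiff_sdiff_univ] at h
    have hsum := sum_eq D
    have hc : (univ \ X).card = Fintype.card E - X.card := card_sdiff_univ X
    have hcle : X.card ≤ Fintype.card E := by
      simpa [card_univ] using card_le_card (subset_univ X)
    have e1 := suppS D (univ \ X)
    have e2 := suppT D univ
    have e3 := suppT D X
    have h3 : D.s X ≤ X.card := (D.hRs X X subset_rfl).2
    have h4 : D.t (univ \ X) ≤ (univ \ X).card := (D.hRt _ _ subset_rfl).2
    have h5 : D.s univ ≤ Fintype.card E := by
      simpa [card_univ] using (D.hRs univ univ subset_rfl).2
    rw [e1, e2, e3]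
    simp only [card_univ]
    omega

lemma supp_supp_s (D : DemiMatroid E) : supp (supp D.s) = D.s := by
  funext X
  have e1 := suppS (Dsup D) X
  have e2 : (Dsup D).t = supp D.t := rfl
  have e3 : (Dsup D).s = supp D.s := rfl
  rw [e2, e3] at e1
  rw [e1, suppT]
  have h3 : D.s X ≤ X.card := (D.hRs X X subset_rfl).2
  omega

lemma supp_supp_t (D : DemiMatroid E) : supp (supp D.t) = D.t := by
  funext X
  have e1 := suppT (Dsup D) X
  have e2 : (Dsup D).t = supp D.t := rfl
  have e3 : (Dsup D).s = supp D.s := rfl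
  rw [e2, e3] at e1
  rw [e1, suppS]
  have h3 : D.t X ≤ X.card := (D.hRt X X subset_rfl).2
  omega

end DemiMatroidAux

open DemiMatroidAux in
/-- The supplement `D̄ = (E, s̄, t̄)` of a demi-matroid `D = (E, s, t)` is a demi-matroid;
moreover `D̄̄ = D`, and the supplement of the dual `D*` equals the dual of the
supplement `D̄`. -/
theorem demimatroid_supplement {E : Type*} [Fintype E] [DecidableEq E]
    (D : DemiMatroid E) :
    ∃ Dsup : DemiMatroid E, Dsup.s = supp D.s ∧ Dsup.t = supp D.t ∧
      (∀ D2 : DemiMatroid E, D2.s = supp Dsup.s → D2.t = supp Dsup.t → D2 = D) ∧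
      (∀ Ddual Dsd : DemiMatroid E,
        Ddual.s = D.t → Ddual.t = D.s →
        Dsd.s = supp Ddual.s → Dsd.t = supp Ddual.t →
        Dsd.s = Dsup.t ∧ Dsd.t = Dsup.s) := by
  refine ⟨Dsup D, rfl, rfl, ?_, ?_⟩
  · intro D2 hs ht
    apply ext_aux
    · rw [hs]; exact supp_supp_s D
    · rw [ht]; exact supp_supp_t D
  · intro Ddual Dsd h1 h2 h3 h4
    exact ⟨by rw [h3, h1]; rfl, by rw [h4, h2]; rfl⟩
end

section
/- In a demi-matroid (E,s,t) with |E| = n and k = s(E), one has s_i = n − σ̄_{k−i} for all 0 ≤ i ≤ k, where s_i := max{|X| : s(X) ≤ i}, σ̄_j := min{|X| : s̄(X) ≥ j}, and s̄(X) := s(E) − s(E−X). -/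
open Finset

/-- In a demi-matroid `(E, s, t)` with `|E| = n` and `k = s E`:
`s_i = n - σ̄_(k-i)` for `0 ≤ i ≤ k`, where `s̄ X = s E - s (E \ X)`. -/
theorem demimatroid_smax_eq {E : Type*} [Fintype E] [DecidableEq E]
    (s t : Finset E → ℕ)
    (hRs : ∀ X Y : Finset E, X ⊆ Y → s X ≤ s Y ∧ s Y ≤ Y.card)
    (hRt : ∀ X Y : Finset E, X ⊆ Y → t X ≤ t Y ∧ t Y ≤ Y.card)
    (hD : ∀ X : Finset E, ((univ \ X).card : ℤ) - s (univ \ X) = (t univ : ℤ) - t X) :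
    ∀ i ≤ s univ,
      sSup {m | ∃ X : Finset E, X.card = m ∧ s X ≤ i} =
        Fintype.card E -
          sInf {m | ∃ X : Finset E, X.card = m ∧
            s univ - i ≤ s univ - s (univ \ X)} := by
  intro i hi
  set n := Fintype.card E with hn
  set k := s univ with hk
  set S : Set ℕ := {m | ∃ X : Finset E, X.card = m ∧ s X ≤ i} with hS
  set T : Set ℕ := {m | ∃ X : Finset E, X.card = m ∧ k - i ≤ k - s (univ \ X)} with hT
  have hs0 : s (∅ : Finset E) = 0 := by
    have := (hRs ∅ ∅ (subset_refl _)).2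
    simpa using this
  have hSne : S.Nonempty := ⟨0, ∅, by simp [hs0]⟩
  have hSbdd : BddAbove S := by
    refine ⟨n, fun m hm => ?_⟩
    obtain ⟨X, hX, _⟩ := hm
    simpa [← hX, hn] using card_le_univ X
  have hMmem := Nat.sSup_mem hSne hSbdd
  set M := sSup S with hM
  obtain ⟨X₀, hX₀card, hX₀s⟩ := hMmem
  have hMn : M ≤ n := by
    rw [← hX₀card]; simpa [hn] using card_le_univ X₀
  -- n - M ∈ T
  have hsub : s (univ \ (univ \ X₀)) ≤ i := by
    rwa [sdiff_sdiff_right_self, inf_eq_inter, univ_inter]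
  have hTmem : (n - M) ∈ T := by
    refine ⟨univ \ X₀, ?_, Nat.sub_le_sub_left hsub k⟩
    rw [card_sdiff_of_subset (subset_univ X₀), hX₀card, card_univ]
  -- lower bound for T
  have hTlb : ∀ m ∈ T, n - M ≤ m := by
    intro m hm
    obtain ⟨X, hXcard, hXle⟩ := hm
    have hbk : s (univ \ X) ≤ k := (hRs (univ \ X) univ (subset_univ _)).1
    have hbi : s (univ \ X) ≤ i := by omega
    have hcompl : (n - m) ∈ S := by
      refine ⟨univ \ X, ?_, hbi⟩
      rw [card_sdiff_of_subset (subset_univ X), hXcard, card_univ]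
    have := le_csSup hSbdd hcompl
    omega
  have hTinf : sInf T = n - M := by
    apply le_antisymm (Nat.sInf_le hTmem)
    exact le_csInf ⟨_, hTmem⟩ hTlb
  rw [hTinf]
  omega
end

section
/- Wei-type duality for demi-matroids: Let D = (E,s,t) be a demi-matroid with |E| = n and k = s(E). Define σ_i := min{|X| : s(X) ≥ i} for 1 ≤ i ≤ k and τ_j := min{|X| : t(X) ≥ j} for 1 ≤ j ≤ n−k. Then the sets U := {σ_1,…,σ_k} and V := {n+1−τ_{n−k},…,n+1−τ_1} are disjoint and U ∪ V = {1,…,n}. -/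
open Finset

/-!
Let `g_s r` be the maximum of `s` over the `r`-element sets. Then `σ_i` is the first `r` with
`i ≤ g_s r`, so `U` is the set of points `r ∈ [1, n]` where `g_s` jumps, and likewise for `τ`
and `g_t`. Complementation turns (D) into `g_t (n - r) + r = g_s r + t(E)`, so the jump of
`g_s` at `r` and the jump of `g_t` at `n + 1 - r` are nonnegative and add up to `1`: exactly one
of them occurs, which makes `V` the complement of `U` in `[1, n]`.
-/

def jumpSet (f : ℕ → ℕ) (N : ℕ) : Finset ℕ := {r ∈ Icc 1 N | f (r - 1) < f r}

section JumpSet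

variable {f g : ℕ → ℕ} {N : ℕ}

lemma jumpSet_subset_Icc : jumpSet f N ⊆ Icc 1 N := filter_subset _ _

lemma image_sInf_le_eq_jumpSet (hf : MonotoneOn f (Set.Iic N)) (h0 : f 0 = 0) :
    (Icc 1 (f N)).image (fun i => sInf {m | i ≤ f m}) = jumpSet f N := by
  ext r
  simp only [jumpSet, mem_image, mem_filter, mem_Icc]
  constructor
  · rintro ⟨i, ⟨hi, hiN⟩, rfl⟩
    have hle : sInf {m | i ≤ f m} ≤ N := Nat.sInf_le hiN
    have hmem : i ≤ f (sInf {m | i ≤ f m}) := Nat.sInf_mem (s := {m | i ≤ f m}) ⟨N, hiN⟩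
    have hpos : 1 ≤ sInf {m | i ≤ f m} := Nat.one_le_iff_ne_zero.2 fun h => by
      rw [h, h0] at hmem; omega
    have hprev : f (sInf {m | i ≤ f m} - 1) < i :=
      not_le.1 (Nat.notMem_of_lt_sInf (s := {m | i ≤ f m}) (by omega))
    exact ⟨⟨hpos, hle⟩, by omega⟩
  · rintro ⟨⟨hr, hrN⟩, hjump⟩
    refine ⟨f r, ⟨by omega, hf (Set.mem_Iic.2 hrN) (Set.mem_Iic.2 le_rfl) hrN⟩, ?_⟩
    have hr_mem : r ∈ {m | f r ≤ f m} := le_refl (f r)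
    refine le_antisymm (Nat.sInf_le hr_mem) (le_csInf ⟨r, hr_mem⟩ fun m hm => ?_)
    by_contra! hmr
    have hm' : f r ≤ f m := hm
    have := hf (Set.mem_Iic.2 (by omega)) (Set.mem_Iic.2 (by omega)) (by omega : m ≤ r - 1)
    omega

lemma mem_jumpSet_iff_notMem_jumpSet (hf : MonotoneOn f (Set.Iic N))
    (hg : MonotoneOn g (Set.Iic N)) {c : ℕ} (hfg : ∀ r ≤ N, g (N - r) + r = f r + c)
    {r : ℕ} (hr : r ∈ Icc 1 N) : r ∈ jumpSet f N ↔ N + 1 - r ∉ jumpSet g N := by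
  rw [mem_Icc] at hr
  have h1 := hfg r hr.2
  have h2 := hfg (r - 1) (by omega)
  have hf' := hf (Set.mem_Iic.2 (by omega : r - 1 ≤ N)) (Set.mem_Iic.2 hr.2) (Nat.sub_le r 1)
  have hg' := hg (Set.mem_Iic.2 (by omega : N - r ≤ N))
    (Set.mem_Iic.2 (by omega : N + 1 - r ≤ N))
    (by omega : N - r ≤ N + 1 - r)
  rw [show N - (r - 1) = N + 1 - r by omega] at h2
  simp only [jumpSet, mem_filter, mem_Icc, show N + 1 - r - 1 = N - r by omega]
  omega

lemma image_reflect_jumpSet (hf : MonotoneOn f (Set.Iic N))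
    (hg : MonotoneOn g (Set.Iic N)) {c : ℕ} (hfg : ∀ r ≤ N, g (N - r) + r = f r + c) :
    (jumpSet g N).image (N + 1 - ·) = Icc 1 N \ jumpSet f N := by
  ext r
  rw [mem_sdiff, mem_image]
  constructor
  · rintro ⟨q, hq, rfl⟩
    have hq' := mem_Icc.1 (jumpSet_subset_Icc hq)
    have hr : N + 1 - q ∈ Icc 1 N := mem_Icc.2 ⟨by omega, by omega⟩
    refine ⟨hr, fun h => (mem_jumpSet_iff_notMem_jumpSet hf hg hfg hr).1 h ?_⟩
    rwa [show N + 1 - (N + 1 - q) = q by omega]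
  · rintro ⟨hr, hrf⟩
    refine ⟨N + 1 - r,
      not_not.1 fun h => hrf ((mem_jumpSet_iff_notMem_jumpSet hf hg hfg hr).2 h), ?_⟩
    have := mem_Icc.1 hr
    omega

end JumpSet

section MaxOnCard

variable {E : Type*} [Fintype E] {s t : Finset E → ℕ} {r : ℕ}

def maxOnCard (s : Finset E → ℕ) (r : ℕ) : ℕ := ((univ : Finset E).powersetCard r).sup s

lemma le_maxOnCard {X : Finset E} (hX : X.card = r) : s X ≤ maxOnCard s r :=
  le_sup (mem_powersetCard.2 ⟨subset_univ X, hX⟩)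

lemma exists_eq_maxOnCard (hr : r ≤ Fintype.card E) :
    ∃ X : Finset E, X.card = r ∧ s X = maxOnCard s r := by
  obtain ⟨X, hX, h⟩ :=
    exists_mem_eq_sup _ ((powersetCard_nonempty (n := r)).2 (by rwa [card_univ])) s
  exact ⟨X, (mem_powersetCard.1 hX).2, h.symm⟩

lemma maxOnCard_zero : maxOnCard s 0 = s ∅ := by
  rw [maxOnCard, powersetCard_zero, sup_singleton]

lemma maxOnCard_card : maxOnCard s (Fintype.card E) = s univ := by
  rw [maxOnCard, ← card_univ, powersetCard_self, sup_singleton]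

lemma monotoneOn_maxOnCard (hs : Monotone s) :
    MonotoneOn (maxOnCard s) (Set.Iic (Fintype.card E)) := by
  intro r _ r' hr' hrr'
  obtain ⟨X, hXr, hX⟩ := exists_eq_maxOnCard (s := s) (hrr'.trans hr')
  obtain ⟨Y, hXY, -, hYr'⟩ := exists_subsuperset_card_eq (subset_univ X) (hXr ▸ hrr')
    (by rwa [card_univ])
  exact hX ▸ (hs hXY).trans (le_maxOnCard hYr')

lemma setOf_exists_card_eq {i : ℕ} (hi : 0 < i) :
    {m | ∃ X : Finset E, X.card = m ∧ i ≤ s X} = {m | i ≤ maxOnCard s m} := by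
  ext m
  simp only [Set.mem_ofPred_eq, maxOnCard, Finset.le_sup_iff hi, mem_powersetCard]
  exact ⟨fun ⟨X, hX, hi⟩ => ⟨X, ⟨subset_univ X, hX⟩, hi⟩,
    fun ⟨X, ⟨_, hX⟩, hi⟩ => ⟨X, hX, hi⟩⟩

lemma image_sInf_card_eq_jumpSet (hs : Monotone s) (h0 : s ∅ = 0) :
    (Icc 1 (s univ)).image (fun i => sInf {m | ∃ X : Finset E, X.card = m ∧ i ≤ s X}) =
      jumpSet (maxOnCard s) (Fintype.card E) := by
  rw [← image_sInf_le_eq_jumpSet (monotoneOn_maxOnCard hs) (maxOnCard_zero.trans h0),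
    maxOnCard_card]
  refine image_congr fun i hi => ?_
  simp only [setOf_exists_card_eq (mem_Icc.1 hi).1]

lemma maxOnCard_sub_add [DecidableEq E] (hst : ∀ X, t (univ \ X) + X.card = s X + t univ)
    (hr : r ≤ Fintype.card E) :
    maxOnCard t (Fintype.card E - r) + r = maxOnCard s r + t univ := by
  have hcompl (X : Finset E) : (univ \ X).card = Fintype.card E - X.card := by
    rw [card_sdiff_of_subset (subset_univ X), card_univ]
  apply le_antisymm
  · obtain ⟨X, hX, htX⟩ := exists_eq_maxOnCard (s := t) (Nat.sub_le (Fintype.card E) r)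
    have hXc : (univ \ X).card = r := by rw [hcompl, hX]; omega
    have := hst (univ \ X)
    rw [Finset.sdiff_sdiff_eq_self (subset_univ X), hXc] at this
    have := le_maxOnCard (s := s) hXc
    omega
  · obtain ⟨X, hX, hsX⟩ := exists_eq_maxOnCard (s := s) hr
    have := hst X
    have := le_maxOnCard (s := t) (r := Fintype.card E - r) (by rw [hcompl, hX])
    omega

end MaxOnCard

/-- Wei-type duality for demi-matroids: with `U = {σ_1, …, σ_k}` and
`V = {n + 1 - τ_(n-k), …, n + 1 - τ_1}`, the sets `U` and `V` are disjoint
and `U ∪ V = {1, …, n}`. -/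
theorem demimatroid_wei_duality {E : Type*} [Fintype E] [DecidableEq E]
    (s t : Finset E → ℕ)
    (hRs : ∀ X Y : Finset E, X ⊆ Y → s X ≤ s Y ∧ s Y ≤ Y.card)
    (hRt : ∀ X Y : Finset E, X ⊆ Y → t X ≤ t Y ∧ t Y ≤ Y.card)
    (hD : ∀ X : Finset E, ((univ \ X).card : ℤ) - s (univ \ X) = (t univ : ℤ) - t X) :
    let n := Fintype.card E
    let k := s univ
    let σ : ℕ → ℕ := fun i => sInf {m | ∃ X : Finset E, X.card = m ∧ i ≤ s X}
    let τ : ℕ → ℕ := fun j => sInf {m | ∃ X : Finset E, X.card = m ∧ j ≤ t X}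
    let U : Finset ℕ := (Finset.Icc 1 k).image σ
    let V : Finset ℕ := (Finset.Icc 1 (n - k)).image (fun j => n + 1 - τ j)
    Disjoint U V ∧ U ∪ V = Finset.Icc 1 n := by
  intro n k σ τ U V
  have hs : Monotone s := fun X Y h => (hRs X Y h).1
  have ht : Monotone t := fun X Y h => (hRt X Y h).1
  have hst (X : Finset E) : t (univ \ X) + X.card = s X + t univ := by
    have := hD (univ \ X)
    rw [Finset.sdiff_sdiff_eq_self (subset_univ X)] at this
    omega
  have ht0 : t ∅ = 0 := Nat.le_zero.1 (hRt ∅ ∅ le_rfl).2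
  have htk : t univ = n - k := by
    have := hst univ
    rw [Finset.sdiff_self, ht0, card_univ] at this
    omega
  have hU : U = jumpSet (maxOnCard s) n :=
    image_sInf_card_eq_jumpSet hs (Nat.le_zero.1 (hRs ∅ ∅ le_rfl).2)
  have hV : V = Icc 1 n \ U := by
    rw [hU, ← image_reflect_jumpSet (monotoneOn_maxOnCard hs) (monotoneOn_maxOnCard ht)
      fun _ => maxOnCard_sub_add hst, ← image_sInf_card_eq_jumpSet ht ht0, image_image, htk]
    rfl
  exact ⟨hV ▸ disjoint_sdiff, hV ▸ union_sdiff_of_subset (hU ▸ jumpSet_subset_Icc)⟩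
end

section
/- Second Wei-type duality for demi-matroids: Let D = (E,s,t) be a demi-matroid with |E| = n and k = s(E). Define s_i := max{|X| : s(X) ≤ i} for 0 ≤ i ≤ k−1 and t_j := max{|X| : t(X) ≤ j} for 0 ≤ j ≤ n−k−1. Then the sets S := {n − s_i : 0 ≤ i ≤ k−1} and T := {t_j + 1 : 0 ≤ j ≤ n−k−1} are disjoint and S ∪ T = {1,…,n}. -/
open Finset

/-- The supremum `sSup {m | ∃ X, X.card = m ∧ f X ≤ i}` is attained, and bounds
the cardinality of every `X` with `f X ≤ i`. -/
private lemma maxcard_spec {E : Type*} [Fintype E] (f : Finset E → ℕ) (hf0 : f ∅ = 0) (i : ℕ) :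
    (∃ X : Finset E, X.card = sSup {m | ∃ X : Finset E, X.card = m ∧ f X ≤ i} ∧ f X ≤ i) ∧
    ∀ X : Finset E, f X ≤ i → X.card ≤ sSup {m | ∃ X : Finset E, X.card = m ∧ f X ≤ i} := by
  have hbdd : BddAbove {m | ∃ X : Finset E, X.card = m ∧ f X ≤ i} := by
    refine ⟨Fintype.card E, ?_⟩
    rintro m ⟨X, rfl, -⟩
    exact X.card_le_univ
  have hne : {m | ∃ X : Finset E, X.card = m ∧ f X ≤ i}.Nonempty :=
    ⟨0, ∅, Finset.card_empty, by simp [hf0]⟩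
  exact ⟨Nat.sSup_mem hne hbdd, fun X hX => le_csSup hbdd ⟨X, rfl, hX⟩⟩

/-- Second Wei-type duality for demi-matroids: with `S = {n - s_i : 0 ≤ i ≤ k-1}` and
`T = {t_j + 1 : 0 ≤ j ≤ n-k-1}`, the sets `S` and `T` are disjoint
and `S ∪ T = {1, …, n}`. -/
theorem demimatroid_wei_duality_second {E : Type*} [Fintype E] [DecidableEq E]
    (s t : Finset E → ℕ)
    (hRs : ∀ X Y : Finset E, X ⊆ Y → s X ≤ s Y ∧ s Y ≤ Y.card)
    (hRt : ∀ X Y : Finset E, X ⊆ Y → t X ≤ t Y ∧ t Y ≤ Y.card)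
    (hD : ∀ X : Finset E, ((univ \ X).card : ℤ) - s (univ \ X) = (t univ : ℤ) - t X) :
    let n := Fintype.card E
    let k := s univ
    let smax : ℕ → ℕ := fun i => sSup {m | ∃ X : Finset E, X.card = m ∧ s X ≤ i}
    let tmax : ℕ → ℕ := fun j => sSup {m | ∃ X : Finset E, X.card = m ∧ t X ≤ j}
    let S : Finset ℕ := (Finset.range k).image (fun i => n - smax i)
    let T : Finset ℕ := (Finset.range (n - k)).image (fun j => tmax j + 1)
    Disjoint S T ∧ S ∪ T = Finset.Icc 1 n := by
  intro n k smax tmax S T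
  classical
  have hn : n = Fintype.card E := rfl
  have hk : k = s univ := rfl
  have hSdef : S = (Finset.range k).image (fun i => n - smax i) := rfl
  have hTdef : T = (Finset.range (n - k)).image (fun j => tmax j + 1) := rfl
  have hsmax_def : ∀ i, smax i = sSup {m | ∃ X : Finset E, X.card = m ∧ s X ≤ i} :=
    fun _ => rfl
  have htmax_def : ∀ j, tmax j = sSup {m | ∃ X : Finset E, X.card = m ∧ t X ≤ j} :=
    fun _ => rfl
  -- duality in complement form
  have hD' : ∀ X : Finset E, ((Xᶜ).card : ℤ) - s Xᶜ = (t univ : ℤ) - t X := by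
    intro X
    simpa [Finset.compl_eq_univ_sdiff] using hD X
  have hD'' : ∀ X : Finset E, ((X).card : ℤ) - s X = (t univ : ℤ) - t Xᶜ := by
    intro X
    simpa using hD' Xᶜ
  have hkn : k ≤ n := by
    have := (hRs univ univ (Finset.Subset.refl _)).2
    simpa [hk, hn] using this
  have hs0 : s (∅ : Finset E) = 0 :=
    Nat.le_zero.mp (by simpa using (hRs ∅ ∅ (Finset.Subset.refl _)).2)
  have ht0 : t (∅ : Finset E) = 0 :=
    Nat.le_zero.mp (by simpa using (hRt ∅ ∅ (Finset.Subset.refl _)).2)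
  have htuniv : (t univ : ℤ) = (n : ℤ) - k := by
    have h := hD' (∅ : Finset E)
    simp only [Finset.compl_empty, ht0, Nat.cast_zero, sub_zero, Finset.card_univ] at h
    rw [← hn, ← hk] at h
    omega
  have htunivN : t univ = n - k := by omega
  -- smax facts
  have hsmax_spec : ∀ i, ∃ X : Finset E, X.card = smax i ∧ s X ≤ i := by
    intro i; rw [hsmax_def]; exact (maxcard_spec s hs0 i).1
  have hsmax_le : ∀ i (X : Finset E), s X ≤ i → X.card ≤ smax i := by
    intro i X hX; rw [hsmax_def]; exact (maxcard_spec s hs0 i).2 X hX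
  have htmax_spec : ∀ j, ∃ X : Finset E, X.card = tmax j ∧ t X ≤ j := by
    intro j; rw [htmax_def]; exact (maxcard_spec t ht0 j).1
  have htmax_le : ∀ j (X : Finset E), t X ≤ j → X.card ≤ tmax j := by
    intro j X hX; rw [htmax_def]; exact (maxcard_spec t ht0 j).2 X hX
  have hsmax_lt : ∀ i, i < k → smax i < n := by
    intro i hi
    obtain ⟨X, hXc, hXs⟩ := hsmax_spec i
    have hle : X.card ≤ n := hn ▸ X.card_le_univ
    rcases lt_or_eq_of_le hle with h | h
    · omega
    · have hXu : X = univ := by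
        apply Finset.eq_univ_of_card
        rw [h, hn]
      rw [hXu, ← hk] at hXs
      omega
  have htmax_lt : ∀ j, j < n - k → tmax j < n := by
    intro j hj
    obtain ⟨X, hXc, hXt⟩ := htmax_spec j
    have hle : X.card ≤ n := hn ▸ X.card_le_univ
    rcases lt_or_eq_of_le hle with h | h
    · omega
    · have hXu : X = univ := by
        apply Finset.eq_univ_of_card
        rw [h, hn]
      rw [hXu, htunivN] at hXt
      omega
  -- unit-increase for s and t
  have hstep_s : ∀ (A : Finset E) (e : E), s (insert e A) ≤ s A + 1 := by
    intro A e
    have h1 := hD'' (insert e A)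
    have h2 := hD'' A
    have h3 : t (insert e A)ᶜ ≤ t Aᶜ :=
      (hRt _ _ (Finset.compl_subset_compl.mpr (Finset.subset_insert e A))).1
    have h4 : (insert e A).card ≤ A.card + 1 := Finset.card_insert_le e A
    omega
  have hstep_t : ∀ (A : Finset E) (e : E), t (insert e A) ≤ t A + 1 := by
    intro A e
    have h1 := hD' (insert e A)
    have h2 := hD' A
    have h3 : s (insert e A)ᶜ ≤ s Aᶜ :=
      (hRs _ _ (Finset.compl_subset_compl.mpr (Finset.subset_insert e A))).1
    have h4 : Aᶜ.card - 1 ≤ (insert e A)ᶜ.card := by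
      rw [Finset.compl_insert]
      exact Finset.pred_card_le_card_erase
    omega
  -- strict monotonicity steps
  have hsmax_step : ∀ i, i < k → smax i < smax (i + 1) := by
    intro i hi
    obtain ⟨X, hXc, hXs⟩ := hsmax_spec i
    have hXn : X.card < n := by rw [hXc]; exact hsmax_lt i hi
    obtain ⟨e, he⟩ : ∃ e, e ∉ X := by
      by_contra h
      push_neg at h
      have hXu : X = univ := Finset.eq_univ_iff_forall.mpr h
      rw [hXu, Finset.card_univ, ← hn] at hXn
      omega
    have h1 : s (insert e X) ≤ i + 1 := le_trans (hstep_s X e) (by omega)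
    have h2 : (insert e X).card ≤ smax (i + 1) := hsmax_le (i + 1) _ h1
    have h3 : (insert e X).card = X.card + 1 := Finset.card_insert_of_notMem he
    omega
  have htmax_step : ∀ j, j < n - k → tmax j < tmax (j + 1) := by
    intro j hj
    obtain ⟨X, hXc, hXt⟩ := htmax_spec j
    have hXn : X.card < n := by rw [hXc]; exact htmax_lt j hj
    obtain ⟨e, he⟩ : ∃ e, e ∉ X := by
      by_contra h
      push_neg at h
      have hXu : X = univ := Finset.eq_univ_iff_forall.mpr h
      rw [hXu, Finset.card_univ, ← hn] at hXn
      omega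
    have h1 : t (insert e X) ≤ j + 1 := le_trans (hstep_t X e) (by omega)
    have h2 : (insert e X).card ≤ tmax (j + 1) := htmax_le (j + 1) _ h1
    have h3 : (insert e X).card = X.card + 1 := Finset.card_insert_of_notMem he
    omega
  -- monotonicity
  have hsmax_mono : ∀ i i', i ≤ i' → smax i ≤ smax i' := by
    intro i i' hii
    obtain ⟨X, hXc, hXs⟩ := hsmax_spec i
    rw [← hXc]
    exact hsmax_le i' X (le_trans hXs hii)
  have htmax_mono : ∀ j j', j ≤ j' → tmax j ≤ tmax j' := by
    intro j j' hjj
    obtain ⟨X, hXc, hXt⟩ := htmax_spec j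
    rw [← hXc]
    exact htmax_le j' X (le_trans hXt hjj)
  have hsmax_smono : ∀ i i', i < i' → i' < k → smax i < smax i' := by
    intro i i' hii hik
    exact lt_of_lt_of_le (hsmax_step i (by omega)) (hsmax_mono _ _ (by omega))
  have htmax_smono : ∀ j j', j < j' → j' < n - k → tmax j < tmax j' := by
    intro j j' hjj hjk
    exact lt_of_lt_of_le (htmax_step j (by omega)) (htmax_mono _ _ (by omega))
  -- cardinalities
  have hScard : S.card = k := by
    rw [hSdef, Finset.card_image_of_injOn, Finset.card_range]
    intro i hi i' hi' h
    simp only [Finset.coe_range, Set.mem_Iio] at hi hi'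
    have h' : n - smax i = n - smax i' := h
    by_contra hne
    rcases lt_trichotomy i i' with hlt | heq | hlt
    · have h1 := hsmax_smono i i' hlt hi'
      have h2 := hsmax_lt i' hi'
      omega
    · exact hne heq
    · have h1 := hsmax_smono i' i hlt hi
      have h2 := hsmax_lt i hi
      omega
  have hTcard : T.card = n - k := by
    rw [hTdef, Finset.card_image_of_injOn, Finset.card_range]
    intro j hj j' hj' h
    simp only [Finset.coe_range, Set.mem_Iio] at hj hj'
    have h' : tmax j + 1 = tmax j' + 1 := h
    by_contra hne
    rcases lt_trichotomy j j' with hlt | heq | hlt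
    · have h1 := htmax_smono j j' hlt hj'
      omega
    · exact hne heq
    · have h1 := htmax_smono j' j hlt hj
      omega
  -- disjointness: the heart of the matter
  have hdisj : Disjoint S T := by
    rw [Finset.disjoint_left]
    intro m hmS hmT
    rw [hSdef, Finset.mem_image] at hmS
    rw [hTdef, Finset.mem_image] at hmT
    obtain ⟨i, hi, him⟩ := hmS
    obtain ⟨j, hj, hjm⟩ := hmT
    rw [Finset.mem_range] at hi hj
    obtain ⟨X, hXc, hXs⟩ := hsmax_spec i
    obtain ⟨Y, hYc, hYt⟩ := htmax_spec j
    have hXn : smax i < n := hsmax_lt i hi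
    have hab : smax i + tmax j + 1 = n := by omega
    have hXcompl : Xᶜ.card = tmax j + 1 := by
      rw [Finset.card_compl, ← hn, hXc]
      omega
    have hYcompl : Yᶜ.card = smax i + 1 := by
      rw [Finset.card_compl, ← hn, hYc]
      omega
    have htX : j + 1 ≤ t Xᶜ := by
      by_contra h
      push_neg at h
      have := htmax_le j Xᶜ (by omega)
      omega
    have hsY : i + 1 ≤ s Yᶜ := by
      by_contra h
      push_neg at h
      have := hsmax_le i Yᶜ (by omega)
      omega
    have e1 := hD'' X
    have e2 := hD' Y
    rw [hXc] at e1
    rw [hYcompl] at e2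
    omega
  refine ⟨hdisj, ?_⟩
  -- union
  have hSsub : S ⊆ Finset.Icc 1 n := by
    intro m hm
    rw [hSdef, Finset.mem_image] at hm
    obtain ⟨i, hi, him⟩ := hm
    rw [Finset.mem_range] at hi
    have := hsmax_lt i hi
    rw [Finset.mem_Icc]
    omega
  have hTsub : T ⊆ Finset.Icc 1 n := by
    intro m hm
    rw [hTdef, Finset.mem_image] at hm
    obtain ⟨j, hj, hjm⟩ := hm
    rw [Finset.mem_range] at hj
    have := htmax_lt j hj
    rw [Finset.mem_Icc]
    omega
  apply Finset.eq_of_subset_of_card_le (Finset.union_subset hSsub hTsub)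
  rw [Nat.card_Icc, Finset.card_union_of_disjoint hdisj, hScard, hTcard]
  omega
end

section
/- Wei duality for matroids: Let M be a matroid on a finite set E with |E| = n and rank k. Define f_i := max{|F| : F ⊆ E, ρ(F) = i} for 0 ≤ i ≤ k−1 and f*_j := max{|F| : F ⊆ E, ρ*(F) = j} for 0 ≤ j ≤ n−k−1, where ρ is the rank function of M and ρ* that of M*. Then the sets S := {n − f_i : 0 ≤ i ≤ k−1} and T := {f*_j + 1 : 0 ≤ j ≤ n−k−1} are disjoint and their union is {1,…,n}. -/
/-!
Let `L s` be the least rank of an `s`-element set. It rises from `L 0 = 0` to `L n = k` in steps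
of `0` or `1`, and `f i` is exactly the position `s` at which `L` steps from `i` to `i + 1`; hence
`S` is the set of reflected step positions `n - s` of `L`, and likewise `T` is the set of shifted
step positions `s + 1` of the dual function `L*`. Complementation of sets gives
`L* m + k = m + L (n - m)`, so `L*` steps between `m - 1` and `m` exactly when `L` does not step
between `n - m` and `n - m + 1`: every `m ∈ {1, …, n}` lies in exactly one of `S` and `T`.
-/

open Finset

namespace Wei

def jumps (L : ℕ → ℕ) (n : ℕ) : Finset ℕ :=
  (range n).filter fun s => L (s + 1) = L s + 1

theorem image_jumps_partition_Icc {L L' : ℕ → ℕ} {n k : ℕ}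
    (hmono : ∀ s < n, L s ≤ L (s + 1)) (hstep : ∀ s < n, L (s + 1) ≤ L s + 1)
    (hdual : ∀ m ≤ n, L' m + k = m + L (n - m)) :
    Disjoint ((jumps L n).image (n - ·)) ((jumps L' n).image (· + 1)) ∧
      (jumps L n).image (n - ·) ∪ (jumps L' n).image (· + 1) = Icc 1 n := by
  have hS : ∀ m, m ∈ (jumps L n).image (n - ·) ↔
      m ∈ Icc 1 n ∧ L (n - m + 1) = L (n - m) + 1 := by
    intro m
    simp only [jumps, mem_image, mem_filter, mem_range, mem_Icc]
    constructor
    · rintro ⟨s, ⟨hs, hjump⟩, rfl⟩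
      rw [Nat.sub_sub_self hs.le]
      exact ⟨by omega, hjump⟩
    · rintro ⟨hm, hjump⟩
      exact ⟨n - m, ⟨by omega, hjump⟩, by omega⟩
  have hT : ∀ m, m ∈ (jumps L' n).image (· + 1) ↔
      m ∈ Icc 1 n ∧ L' m = L' (m - 1) + 1 := by
    intro m
    simp only [jumps, mem_image, mem_filter, mem_range, mem_Icc]
    constructor
    · rintro ⟨s, ⟨hs, hjump⟩, rfl⟩
      exact ⟨by omega, by simpa using hjump⟩
    · rintro ⟨hm, hjump⟩
      exact ⟨m - 1, ⟨by omega, by rwa [Nat.sub_add_cancel hm.1]⟩, by omega⟩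
  have hflip : ∀ m ∈ Icc 1 n, L (n - m + 1) = L (n - m) + 1 ↔ ¬L' m = L' (m - 1) + 1 := by
    intro m hm
    rw [mem_Icc] at hm
    have h₁ := hdual m hm.2
    have h₂ := hdual (m - 1) (by omega)
    rw [show n - (m - 1) = n - m + 1 by omega] at h₂
    have := hmono (n - m) (by omega)
    have := hstep (n - m) (by omega)
    omega
  constructor
  · rw [disjoint_left]
    intro m hmS hmT
    rw [hS] at hmS
    rw [hT] at hmT
    exact (hflip m hmS.1).1 hmS.2 hmT.2
  · ext m
    rw [mem_union, hS, hT]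
    have := hflip m
    tauto

variable {E : Type*}

section

variable [DecidableEq E]

/-- The local form of the matroid rank axioms, without submodularity. -/
structure IsUnitIncreasing (r : Finset E → ℕ) : Prop where
  map_empty : r ∅ = 0
  le_insert (X : Finset E) (e : E) : r X ≤ r (insert e X)
  insert_le (X : Finset E) (e : E) : r (insert e X) ≤ r X + 1

theorem isUnitIncreasing_of_submodular {r : Finset E → ℕ}
    (hmono : ∀ X Y : Finset E, X ⊆ Y → r X ≤ r Y) (hcard : ∀ X : Finset E, r X ≤ #X)
    (hsubmod : ∀ X Y : Finset E, r (X ∪ Y) + r (X ∩ Y) ≤ r X + r Y) :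
    IsUnitIncreasing r where
  map_empty := Nat.le_zero.mp (by simpa using hcard ∅)
  le_insert X e := hmono _ _ (subset_insert e X)
  insert_le X e := by
    have := hsubmod {e} X
    have : r {e} ≤ 1 := by simpa using hcard {e}
    rw [insert_eq]
    omega

namespace IsUnitIncreasing

variable {r : Finset E → ℕ}

theorem le_union (hr : IsUnitIncreasing r) (X D : Finset E) : r X ≤ r (X ∪ D) := by
  induction D using Finset.induction_on with
  | empty => simp
  | insert a D _ ih => rw [union_insert]; exact ih.trans (hr.le_insert _ a)

theorem mono (hr : IsUnitIncreasing r) {X Y : Finset E} (h : X ⊆ Y) : r X ≤ r Y := by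
  simpa [union_sdiff_of_subset h] using hr.le_union X (Y \ X)

theorem union_le (hr : IsUnitIncreasing r) (X D : Finset E) : r (X ∪ D) ≤ r X + #D := by
  induction D using Finset.induction_on with
  | empty => simp
  | insert a D ha ih =>
    rw [union_insert, card_insert_of_notMem ha]
    have := hr.insert_le (X ∪ D) a
    omega

end IsUnitIncreasing

end

noncomputable def minRank (r : Finset E → ℕ) (s : ℕ) : ℕ :=
  sInf {t | ∃ F : Finset E, #F = s ∧ r F = t}

noncomputable def maxCard (r : Finset E → ℕ) (i : ℕ) : ℕ :=
  sSup {m | ∃ F : Finset E, #F = m ∧ r F = i}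

theorem minRank_le (r : Finset E → ℕ) (F : Finset E) : minRank r #F ≤ r F :=
  Nat.sInf_le ⟨F, rfl, rfl⟩

section

variable [Fintype E]

theorem exists_card_eq_minRank (r : Finset E → ℕ) {s : ℕ} (hs : s ≤ Fintype.card E) :
    ∃ F : Finset E, #F = s ∧ r F = minRank r s := by
  obtain ⟨F, -, hF⟩ := exists_subset_card_eq (s := (univ : Finset E)) (by simpa using hs)
  have hne : {t | ∃ F : Finset E, #F = s ∧ r F = t}.Nonempty := ⟨r F, F, hF, rfl⟩
  exact Nat.sInf_mem hne

theorem minRank_card (r : Finset E → ℕ) : minRank r (Fintype.card E) = r univ := by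
  obtain ⟨F, hF, hrF⟩ := exists_card_eq_minRank r le_rfl
  rw [← hrF, eq_univ_of_card F hF]

theorem bddAbove_maxCard_set (r : Finset E → ℕ) (i : ℕ) :
    BddAbove {m | ∃ F : Finset E, #F = m ∧ r F = i} :=
  ⟨Fintype.card E, by rintro _ ⟨F, rfl, -⟩; exact card_le_univ F⟩

theorem card_le_maxCard (r : Finset E → ℕ) {F : Finset E} {i : ℕ} (h : r F = i) :
    #F ≤ maxCard r i :=
  le_csSup (bddAbove_maxCard_set r i) ⟨F, rfl, h⟩

variable [DecidableEq E]

def dualRank (r : Finset E → ℕ) (X : Finset E) : ℕ :=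
  #X + r (univ \ X) - r univ

namespace IsUnitIncreasing

variable {r : Finset E → ℕ}

theorem exists_superset_eq (hr : IsUnitIncreasing r) {X : Finset E} {i : ℕ}
    (hX : r X ≤ i) (hi : i ≤ r univ) : ∃ Z, X ⊆ Z ∧ r Z = i := by
  suffices ∀ D : Finset E, i ≤ r (X ∪ D) → ∃ Z, X ⊆ Z ∧ r Z = i from
    this univ (by rwa [union_eq_right.2 (subset_univ X)])
  intro D
  induction D using Finset.induction_on with
  | empty => exact fun h => ⟨X, subset_rfl, le_antisymm hX (by simpa using h)⟩
  | insert a D _ ih =>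
    intro h
    by_cases hD : i ≤ r (X ∪ D)
    · exact ih hD
    · refine ⟨X ∪ insert a D, subset_union_left, ?_⟩
      have := hr.insert_le (X ∪ D) a
      rw [union_insert] at h ⊢
      omega

theorem dualRank_add (hr : IsUnitIncreasing r) (X : Finset E) :
    dualRank r X + r univ = #X + r (univ \ X) := by
  have := hr.union_le (univ \ X) X
  rw [sdiff_union_self_eq_union, union_eq_left.2 (subset_univ X)] at this
  unfold dualRank
  omega

theorem dualRank_univ (hr : IsUnitIncreasing r) :
    dualRank r univ = Fintype.card E - r univ := by
  simp [dualRank, hr.map_empty]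

theorem dual (hr : IsUnitIncreasing r) : IsUnitIncreasing (dualRank r) where
  map_empty := by
    have := hr.dualRank_add ∅
    simp only [card_empty, sdiff_empty] at this
    omega
  le_insert X e := by
    by_cases he : e ∈ X
    · rw [insert_eq_of_mem he]
    · have h₁ := hr.dualRank_add X
      have h₂ := hr.dualRank_add (insert e X)
      have := hr.insert_le ((univ \ X).erase e) e
      rw [insert_erase (mem_sdiff.2 ⟨mem_univ e, he⟩)] at this
      rw [card_insert_of_notMem he, sdiff_insert] at h₂
      omega
  insert_le X e := by
    by_cases he : e ∈ X
    · rw [insert_eq_of_mem he]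
      omega
    · have h₁ := hr.dualRank_add X
      have h₂ := hr.dualRank_add (insert e X)
      have := hr.mono (erase_subset e (univ \ X))
      rw [card_insert_of_notMem he, sdiff_insert] at h₂
      omega

theorem minRank_mono (hr : IsUnitIncreasing r) {s t : ℕ} (hst : s ≤ t)
    (ht : t ≤ Fintype.card E) : minRank r s ≤ minRank r t := by
  obtain ⟨F, hF, hrF⟩ := exists_card_eq_minRank r ht
  obtain ⟨G, hGF, rfl⟩ := exists_subset_card_eq (s := F) (n := s) (by omega)
  exact (minRank_le r G).trans ((hr.mono hGF).trans hrF.le)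

theorem minRank_succ_le (hr : IsUnitIncreasing r) {s : ℕ} (hs : s < Fintype.card E) :
    minRank r (s + 1) ≤ minRank r s + 1 := by
  obtain ⟨F, rfl, hrF⟩ := exists_card_eq_minRank r hs.le
  obtain ⟨e, he⟩ : ∃ e, e ∉ F := by
    by_contra! h
    exact hs.ne (by rw [eq_univ_of_forall h, card_univ])
  calc minRank r (#F + 1) = minRank r #(insert e F) := by rw [card_insert_of_notMem he]
    _ ≤ r (insert e F) := minRank_le r _
    _ ≤ r F + 1 := hr.insert_le F e
    _ = minRank r #F + 1 := by rw [hrF]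

theorem minRank_dual_add (hr : IsUnitIncreasing r) {m : ℕ} (hm : m ≤ Fintype.card E) :
    minRank (dualRank r) m + r univ = m + minRank r (Fintype.card E - m) := by
  apply le_antisymm
  · obtain ⟨G, hG, hrG⟩ := exists_card_eq_minRank r (Nat.sub_le (Fintype.card E) m)
    have hGc : #(univ \ G) = m := by
      rw [card_sdiff_of_subset (subset_univ G), card_univ, hG]
      omega
    have := hr.dualRank_add (univ \ G)
    rw [sdiff_sdiff_right_self, inf_eq_inter, univ_inter, hGc] at this
    have := minRank_le (dualRank r) (univ \ G)
    rw [hGc] at this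
    omega
  · obtain ⟨F, rfl, hrF⟩ := exists_card_eq_minRank (dualRank r) hm
    have := hr.dualRank_add F
    have := minRank_le r (univ \ F)
    rw [card_sdiff_of_subset (subset_univ F), card_univ] at this
    omega

theorem exists_card_eq_maxCard (hr : IsUnitIncreasing r) {i : ℕ} (hi : i ≤ r univ) :
    ∃ F : Finset E, #F = maxCard r i ∧ r F = i := by
  obtain ⟨Z, -, hZ⟩ := hr.exists_superset_eq (X := ∅) (by simp [hr.map_empty]) hi
  have hne : {m | ∃ F : Finset E, #F = m ∧ r F = i}.Nonempty := ⟨#Z, Z, rfl, hZ⟩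
  exact Nat.sSup_mem hne (bddAbove_maxCard_set r i)

theorem minRank_le_iff_le_maxCard (hr : IsUnitIncreasing r) {s i : ℕ}
    (hs : s ≤ Fintype.card E) (hi : i ≤ r univ) : minRank r s ≤ i ↔ s ≤ maxCard r i := by
  constructor
  · intro h
    obtain ⟨F, rfl, hrF⟩ := exists_card_eq_minRank r hs
    obtain ⟨Z, hFZ, hrZ⟩ := hr.exists_superset_eq (hrF.trans_le h) hi
    exact (card_le_card hFZ).trans (card_le_maxCard r hrZ)
  · intro h
    obtain ⟨F, hF, hrF⟩ := hr.exists_card_eq_maxCard hi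
    obtain ⟨G, hGF, rfl⟩ := exists_subset_card_eq (s := F) (n := s) (by omega)
    exact (minRank_le r G).trans ((hr.mono hGF).trans hrF.le)

theorem image_maxCard_range (hr : IsUnitIncreasing r) :
    (range (r univ)).image (maxCard r) = jumps (minRank r) (Fintype.card E) := by
  ext s
  simp only [jumps, mem_image, mem_filter, mem_range]
  constructor
  · rintro ⟨i, hi, rfl⟩
    have hlt : maxCard r i < Fintype.card E := by
      by_contra! h
      have := (hr.minRank_le_iff_le_maxCard le_rfl hi.le).2 h
      rw [minRank_card] at this
      omega
    have hle := (hr.minRank_le_iff_le_maxCard hlt.le hi.le).2 le_rfl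
    have hgt := (hr.minRank_le_iff_le_maxCard (s := maxCard r i + 1) hlt hi.le).not.2 (by omega)
    have := hr.minRank_succ_le hlt
    exact ⟨hlt, by omega⟩
  · rintro ⟨hs, hjump⟩
    have hk : minRank r s < r univ := by
      have := hr.minRank_mono (s := s + 1) hs le_rfl
      rw [minRank_card] at this
      omega
    refine ⟨minRank r s, hk, le_antisymm ?_ ?_⟩
    · by_contra! h
      have := (hr.minRank_le_iff_le_maxCard (s := s + 1) hs hk.le).2 h
      omega
    · exact (hr.minRank_le_iff_le_maxCard hs.le hk.le).1 le_rfl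

end IsUnitIncreasing

end

end Wei

open Wei

/-- Wei duality for matroids: with `S = {n - f_i : 0 ≤ i ≤ k-1}` and
`T = {f*_j + 1 : 0 ≤ j ≤ n-k-1}`, the sets `S` and `T` are disjoint and their
union is `{1, …, n}`. -/
theorem matroid_wei_duality {E : Type*} [Fintype E] [DecidableEq E]
    (ρ : Finset E → ℕ)
    (hmono : ∀ X Y : Finset E, X ⊆ Y → ρ X ≤ ρ Y)
    (hcard : ∀ X : Finset E, ρ X ≤ X.card)
    (hsubmod : ∀ X Y : Finset E, ρ (X ∪ Y) + ρ (X ∩ Y) ≤ ρ X + ρ Y) :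
    let n := Fintype.card E
    let k := ρ univ
    let ρd : Finset E → ℕ := fun X => X.card + ρ (univ \ X) - ρ univ
    let f : ℕ → ℕ := fun i => sSup {m | ∃ F : Finset E, F.card = m ∧ ρ F = i}
    let fd : ℕ → ℕ := fun j => sSup {m | ∃ F : Finset E, F.card = m ∧ ρd F = j}
    let S : Finset ℕ := (Finset.range k).image (fun i => n - f i)
    let T : Finset ℕ := (Finset.range (n - k)).image (fun j => fd j + 1)
    Disjoint S T ∧ S ∪ T = Finset.Icc 1 n := by
  intro n k ρd f fd S T
  have hρ : IsUnitIncreasing ρ := isUnitIncreasing_of_submodular hmono hcard hsubmod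
  have hS : S = (jumps (minRank ρ) n).image (n - ·) := by
    rw [← hρ.image_maxCard_range, image_image]
    rfl
  have hT : T = (jumps (minRank (dualRank ρ)) n).image (· + 1) := by
    rw [← hρ.dual.image_maxCard_range, hρ.dualRank_univ, image_image]
    rfl
  rw [hS, hT]
  exact image_jumps_partition_Icc (fun s hs => hρ.minRank_mono s.le_succ hs)
    (fun s hs => hρ.minRank_succ_le hs) (fun m hm => hρ.minRank_dual_add hm)
end

section
/- Let C be a linear [n,k] code over a field F with coordinate set E = {1,…,n}. Define ρ_C(X) := dim of the code C punctured to the coordinates X (i.e., the dimension of the image of C under projection onto coordinates in X), and similarly ρ_{C^⊥} for the dual code C^⊥. Then (E, ρ_C, ρ_{C^⊥}) is a demi-matroid. -/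
open Finset

/-- Puncturing: the rank function of a linear code `C ⊆ F^n`; `rhoC C X` is the
dimension of the image of `C` under the projection onto the coordinates in `X`. -/
noncomputable def rhoC {F : Type*} [Field F] {n : ℕ}
    (C : Submodule F (Fin n → F)) (X : Finset (Fin n)) : ℕ :=
  Module.finrank F
    (C.map (LinearMap.pi (fun i : Fin n =>
      if i ∈ X then (LinearMap.proj i : (Fin n → F) →ₗ[F] F) else 0)))

/-- The dual code `C^⊥ = {y : x ⬝ y = 0 for all x ∈ C}`. -/
noncomputable def dualCode {F : Type*} [Field F] {n : ℕ}
    (C : Submodule F (Fin n → F)) : Submodule F (Fin n → F) :=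
  ⨅ x ∈ C, LinearMap.ker
    (∑ i : Fin n, x i • (LinearMap.proj i : (Fin n → F) →ₗ[F] F))
/-! Write `V_X` for the vectors supported on `X`. Puncturing to `X` has kernel `V_{E−X}`, so
`ρ_C(X) = dim C − dim (C ∩ V_{E−X})`, which gives monotonicity, and `ρ_C(X) ≤ dim V_X = |X|`.
For the duality axiom, `V_X^⊥ = V_{E−X}`, hence `C^⊥ ∩ V_{E−X} = (C + V_X)^⊥`; counting dimensions
with `dim W^⊥ = n − dim W` and Grassmann's formula gives `ρ_{C^⊥}(X) + dim C = |X| + ρ_C(E − X)`,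
and the case `X = E` identifies `dim C` with `n − ρ_{C^⊥}(E)`. -/

open Module LinearMap

theorem Submodule.finrank_map_add_finrank_inf_ker {K V W : Type*} [DivisionRing K]
    [AddCommGroup V] [Module K V] [FiniteDimensional K V] [AddCommGroup W] [Module K W]
    (f : V →ₗ[K] W) (p : Submodule K V) :
    finrank K (p.map f) + finrank K ↥(p ⊓ ker f) = finrank K p := by
  rw [← (f.domRestrict p).finrank_range_add_finrank_ker, range_domRestrict, ker_domRestrict,
    ← Submodule.map_comap_subtype, Submodule.finrank_map_subtype_eq]

section
variable (F : Type*) [Field F] {n : ℕ}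

def puncture (X : Finset (Fin n)) : (Fin n → F) →ₗ[F] (Fin n → F) :=
  LinearMap.pi fun i => if i ∈ X then proj i else 0

def supported (X : Finset (Fin n)) : Submodule F (Fin n → F) :=
  ⨅ i ∈ (X : Set (Fin n))ᶜ, ker (proj i : (Fin n → F) →ₗ[F] F)

variable {F}

theorem rhoC_eq_finrank_map_puncture (C : Submodule F (Fin n → F)) (X : Finset (Fin n)) :
    rhoC C X = finrank F (C.map (puncture F X)) := rfl

theorem puncture_apply (X : Finset (Fin n)) (v : Fin n → F) (i : Fin n) :
    puncture F X v i = if i ∈ X then v i else 0 := by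
  unfold puncture; split_ifs <;> simp [*]

theorem mem_supported {X : Finset (Fin n)} {v : Fin n → F} :
    v ∈ supported F X ↔ ∀ i ∉ X, v i = 0 := by
  simp [supported, Submodule.mem_iInf]

theorem supported_mono {X Y : Finset (Fin n)} (h : X ⊆ Y) : supported F X ≤ supported F Y :=
  fun _ hv => mem_supported.2 fun i hi => mem_supported.1 hv i fun hX => hi (h hX)

theorem finrank_supported (X : Finset (Fin n)) : finrank F (supported F X) = X.card := by
  classical
  rw [supported, (iInfKerProjEquiv F (fun _ => F) disjoint_compl_right (by simp)).finrank_eq]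
  simp

theorem puncture_mem_supported (X : Finset (Fin n)) (v : Fin n → F) :
    puncture F X v ∈ supported F X :=
  mem_supported.2 fun i hi => by simp [puncture_apply, hi]

theorem ker_puncture (X : Finset (Fin n)) : ker (puncture F X) = supported F Xᶜ := by
  ext v
  simp only [mem_ker, mem_supported, funext_iff, puncture_apply, Finset.mem_compl, not_not]
  exact forall_congr' fun i => by by_cases hi : i ∈ X <;> simp [hi]

theorem mem_dualCode {C : Submodule F (Fin n → F)} {y : Fin n → F} :
    y ∈ dualCode C ↔ ∀ x ∈ C, x ⬝ᵥ y = 0 := by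
  simp [dualCode, Submodule.mem_iInf, dotProduct, smul_eq_mul]

theorem dualCode_eq_dualCoannihilator (C : Submodule F (Fin n → F)) :
    dualCode C = (C.map (dotProductEquiv F (Fin n)).toLinearMap).dualCoannihilator := by
  ext y
  rw [mem_dualCode, Submodule.mem_dualCoannihilator]
  exact ⟨fun h _ ⟨x, hx, e⟩ => e ▸ h x hx, fun h x hx => h _ ⟨x, hx, rfl⟩⟩

theorem finrank_dualCode_add_finrank (C : Submodule F (Fin n → F)) :
    finrank F (dualCode C) + finrank F C = n := by
  rw [dualCode_eq_dualCoannihilator, add_comm,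
    ← (dotProductEquiv F (Fin n)).finrank_map_eq C,
    Subspace.finrank_add_finrank_dualCoannihilator_eq, finrank_fin_fun]

theorem dualCode_sup (U W : Submodule F (Fin n → F)) :
    dualCode (U ⊔ W) = dualCode U ⊓ dualCode W := by
  simp only [dualCode_eq_dualCoannihilator, Submodule.map_sup,
    Submodule.dualCoannihilator_sup_eq]

theorem dualCode_supported (X : Finset (Fin n)) :
    dualCode (supported F X) = supported F Xᶜ := by
  ext y
  simp only [mem_dualCode, mem_supported, Finset.mem_compl, not_not]
  constructor
  · intro hy i hi
    simpa using hy (Pi.single i 1) fun j hj => Pi.single_eq_of_ne (by rintro rfl; exact hj hi) 1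
  · intro hy x hx
    refine Finset.sum_eq_zero fun i _ => ?_
    by_cases hi : i ∈ X
    · simp [hy i hi]
    · simp [hx i hi]

theorem rhoC_add_finrank_inf_supported (C : Submodule F (Fin n → F)) (X : Finset (Fin n)) :
    rhoC C X + finrank F ↥(C ⊓ supported F Xᶜ) = finrank F C := by
  rw [rhoC_eq_finrank_map_puncture, ← ker_puncture]
  exact Submodule.finrank_map_add_finrank_inf_ker _ _

theorem rhoC_le_card (C : Submodule F (Fin n → F)) (X : Finset (Fin n)) :
    rhoC C X ≤ X.card := by
  rw [rhoC_eq_finrank_map_puncture, ← finrank_supported (F := F) X]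
  exact Submodule.finrank_mono <|
    Submodule.map_le_iff_le_comap.2 fun v _ => puncture_mem_supported X v

theorem rhoC_mono (C : Submodule F (Fin n → F)) {X Y : Finset (Fin n)} (h : X ⊆ Y) :
    rhoC C X ≤ rhoC C Y := by
  have hX := rhoC_add_finrank_inf_supported C X
  have hY := rhoC_add_finrank_inf_supported C Y
  have hle := Submodule.finrank_mono <|
    inf_le_inf_left C (supported_mono (F := F) (compl_subset_compl.2 h))
  omega

theorem rhoC_dualCode_add_finrank (C : Submodule F (Fin n → F)) (X : Finset (Fin n)) :
    rhoC (dualCode C) X + finrank F C = X.card + rhoC C Xᶜ := by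
  have hdual := rhoC_add_finrank_inf_supported (dualCode C) X
  rw [← dualCode_supported, ← dualCode_sup] at hdual
  have hperp := finrank_dualCode_add_finrank (C ⊔ supported F X)
  have hsup := Submodule.finrank_sup_add_finrank_inf_eq C (supported F X)
  rw [finrank_supported] at hsup
  have hC := rhoC_add_finrank_inf_supported C Xᶜ
  rw [compl_compl] at hC
  have hCperp := finrank_dualCode_add_finrank C
  omega

end

theorem code_demimatroid_general {F : Type*} [Field F] (n : ℕ)
    (C : Submodule F (Fin n → F)) :
    (∀ X Y : Finset (Fin n), X ⊆ Y → rhoC C X ≤ rhoC C Y ∧ rhoC C Y ≤ Y.card) ∧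
    (∀ X Y : Finset (Fin n), X ⊆ Y →
      rhoC (dualCode C) X ≤ rhoC (dualCode C) Y ∧ rhoC (dualCode C) Y ≤ Y.card) ∧
    (∀ X : Finset (Fin n),
      ((univ \ X).card : ℤ) - rhoC C (univ \ X) =
        (rhoC (dualCode C) univ : ℤ) - rhoC (dualCode C) X) := by
  refine ⟨fun X Y h => ⟨rhoC_mono C h, rhoC_le_card C Y⟩,
    fun X Y h => ⟨rhoC_mono (dualCode C) h, rhoC_le_card (dualCode C) Y⟩, fun X => ?_⟩
  have hX := rhoC_dualCode_add_finrank C X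
  have hE := rhoC_dualCode_add_finrank C univ
  have hempty := rhoC_le_card C univᶜ
  have hcard := card_compl_add_card X
  simp only [compl_univ, card_empty, card_univ, Fintype.card_fin] at hE hempty hcard
  rw [← compl_eq_univ_sdiff]
  omega

/-- For a linear `[n, k]` code `C` over a field `F` with coordinate set
`E = {1, …, n}`, the triple `(E, ρ_C, ρ_{C^⊥})` is a demi-matroid. -/
theorem code_demimatroid {F : Type*} [Field F] (n k : ℕ)
    (C : Submodule F (Fin n → F)) (hk : Module.finrank F C = k) :
    (∀ X Y : Finset (Fin n), X ⊆ Y → rhoC C X ≤ rhoC C Y ∧ rhoC C Y ≤ Y.card) ∧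
    (∀ X Y : Finset (Fin n), X ⊆ Y →
      rhoC (dualCode C) X ≤ rhoC (dualCode C) Y ∧ rhoC (dualCode C) Y ≤ Y.card) ∧
    (∀ X : Finset (Fin n),
      ((univ \ X).card : ℤ) - rhoC C (univ \ X) =
        (rhoC (dualCode C) univ : ℤ) - rhoC (dualCode C) X) :=
  code_demimatroid_general n C
end
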